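/- Let $A$ be an $N\times N$ row-stochastic matrix all of whose entries satisfy $a_{ij}\geq\delta>0$. Then $V(Ax)\leq(1-2\delta)V(x)$ for all $x\in\mathbb{R}^N$ (assuming $\delta\leq 1/2$), where $V(x)=\max_i x_i-\min_i x_i$. -/
import Mathlib


open Matrix Finset

/-- If all entries of a row-stochastic matrix `A` are at least `δ > 0` (with `δ ≤ 1/2`),
then the Tsitsiklis diameter function contracts: `V(Ax) ≤ (1 - 2δ) V(x)`. -/
theorem tsitsiklis_contraction
    {N : ℕ} (hN : 0 < N) (A : Matrix (Fin N) (Fin N) ℝ) (δ : ℝ)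
    (hδpos : 0 < δ) (hδhalf : δ ≤ 1 / 2)
    (hentries : ∀ i j, δ ≤ A i j)
    (hrow : ∀ i, ∑ j, A i j = 1) (x : Fin N → ℝ) :
    (univ.sup' (univ_nonempty_iff.mpr ⟨⟨0, hN⟩⟩) (A.mulVec x) -
      univ.inf' (univ_nonempty_iff.mpr ⟨⟨0, hN⟩⟩) (A.mulVec x)) ≤
    (1 - 2 * δ) *
    (univ.sup' (univ_nonempty_iff.mpr ⟨⟨0, hN⟩⟩) x -
      univ.inf' (univ_nonempty_iff.mpr ⟨⟨0, hN⟩⟩) x) := by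
  have hne : (univ : Finset (Fin N)).Nonempty := univ_nonempty_iff.mpr ⟨⟨0, hN⟩⟩
  set M := univ.sup' hne x with hM
  set m := univ.inf' hne x with hm
  obtain ⟨j0, _, hj0⟩ := exists_mem_eq_inf' hne x
  obtain ⟨j1, _, hj1⟩ := exists_mem_eq_sup' hne x
  have hxM : ∀ j, x j ≤ M := fun j => le_sup' x (mem_univ j)
  have hxm : ∀ j, m ≤ x j := fun j => inf'_le x (mem_univ j)
  have hMm : m ≤ M := le_trans (hxm j1) (hxM j1)
  have hmul : ∀ i, A.mulVec x i = ∑ j, A i j * x j := by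
    intro i; simp [Matrix.mulVec, dotProduct]
  have hup : ∀ i, A.mulVec x i ≤ M - δ * (M - m) := by
    intro i
    have key : A i j0 * (M - x j0) ≤ ∑ j, A i j * (M - x j) :=
      Finset.single_le_sum (f := fun j => A i j * (M - x j))
        (fun j _ => mul_nonneg (le_trans hδpos.le (hentries i j)) (by linarith [hxM j]))
        (mem_univ j0)
    have hsum : ∑ j, A i j * (M - x j) = M - A.mulVec x i := by
      rw [hmul i]
      simp only [mul_sub]
      rw [Finset.sum_sub_distrib, ← Finset.sum_mul, hrow i, one_mul]
    rw [hsum, ← hj0] at key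
    have hδle : δ * (M - m) ≤ A i j0 * (M - m) :=
      mul_le_mul_of_nonneg_right (hentries i j0) (by linarith)
    linarith
  have hdown : ∀ i, m + δ * (M - m) ≤ A.mulVec x i := by
    intro i
    have key : A i j1 * (x j1 - m) ≤ ∑ j, A i j * (x j - m) :=
      Finset.single_le_sum (f := fun j => A i j * (x j - m))
        (fun j _ => mul_nonneg (le_trans hδpos.le (hentries i j)) (by linarith [hxm j]))
        (mem_univ j1)
    have hsum : ∑ j, A i j * (x j - m) = A.mulVec x i - m := by
      rw [hmul i]
      simp only [mul_sub]
      rw [Finset.sum_sub_distrib, ← Finset.sum_mul, hrow i, one_mul]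
    rw [hsum, ← hj1] at key
    have hδle : δ * (M - m) ≤ A i j1 * (M - m) :=
      mul_le_mul_of_nonneg_right (hentries i j1) (by linarith)
    linarith
  have hsup : univ.sup' hne (A.mulVec x) ≤ M - δ * (M - m) :=
    Finset.sup'_le hne _ (fun i _ => hup i)
  have hinf : m + δ * (M - m) ≤ univ.inf' hne (A.mulVec x) :=
    Finset.le_inf' hne _ (fun i _ => hdown i)
  nlinarith [hsup, hinf, hMm]
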